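/- arXiv:1202.2928 — 2 statements merged into one kernel-verified Lean document; each statement's English description precedes it below -/
import Mathlib

section
/- For any integer $r \geq 1$, in the path graph $G_r$ on vertices $v_1, \dots, v_{2r+1}$ with thresholds $\theta(v_1) = \theta(v_{2r+1}) = 2$, $\theta(v_{r+1}) = 2r+1$, $\theta(v_i) = i$ for $1 < i \leq r$, and $\theta(v_i) = 2r+2-i$ for $r+2 \leq i < 2r+1$, the two-element seedset $\{v_1, v_{2r+1}\}$ activates every node of the graph. -/
/-- The number of vertices of the connected component containing `v` in the
subgraph of `G` induced by `insert v A`. -/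
noncomputable def compCard {V : Type*} (G : SimpleGraph V) (A : Set V) (v : V) : ℕ :=
  Nat.card {u : (insert v A : Set V) //
    (G.induce (insert v A)).Reachable ⟨v, Set.mem_insert v A⟩ u}

/-- A set of nodes `A` is closed under the activation rule. -/
def Closed {V : Type*} (G : SimpleGraph V) (θ : V → ℕ) (A : Set V) : Prop :=
  ∀ v, θ v ≤ compCard G A v → v ∈ A

/-- The set of nodes eventually activated by the seedset `S`. -/
def activeSet {V : Type*} (G : SimpleGraph V) (θ : V → ℕ) (S : Set V) : Set V :=
  ⋂₀ {A : Set V | S ⊆ A ∧ Closed G θ A}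

/-- A seedset is feasible when it eventually activates every node. -/
def Feasible {V : Type*} (G : SimpleGraph V) (θ : V → ℕ) (S : Set V) : Prop :=
  activeSet G θ S = Set.univ

/-- The threshold function on the path graph `G_r` with `2r+1` vertices
`v_1, …, v_{2r+1}` (vertex `v_{i+1}` is index `i`). -/
def pathTheta (r : ℕ) (i : Fin (2 * r + 1)) : ℕ :=
  if (i : ℕ) = 0 ∨ (i : ℕ) = 2 * r then 2
  else if (i : ℕ) = r then 2 * r + 1
  else if (i : ℕ) < r then (i : ℕ) + 1
  else 2 * r + 1 - (i : ℕ)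

/-!
Any connected set `s ∋ v` of otherwise active nodes lies in the component counted by
`compCard`, so a closed set containing the seeds contains `v` as soon as `θ v ≤ |s|`.
On the path every interval is connected: `v_{i+1}` with `i < r` sees the initial segment
`v_1, …, v_{i+1}` of exactly `θ = i + 1` nodes, the right half is symmetric, and the
center then sees the whole path of `2r + 1` nodes.
-/

open SimpleGraph

theorem SimpleGraph.pathGraph_induce_reachable {n : ℕ} {s : Set (Fin n)} (hs : s.OrdConnected)
    {a b : Fin n} (ha : a ∈ s) (hb : b ∈ s) (hab : a ≤ b) :
    ((pathGraph n).induce s).Reachable ⟨a, ha⟩ ⟨b, hb⟩ := by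
  obtain ⟨k, hk⟩ : ∃ k, (b : ℕ) = a + k := ⟨b - a, by omega⟩
  induction k generalizing b with
  | zero =>
    obtain rfl : a = b := Fin.ext (by omega)
    rfl
  | succ k ih =>
    let c : Fin n := ⟨a + k, by omega⟩
    have hac : a ≤ c := Fin.le_def.2 (Nat.le_add_right _ _)
    have hc : c ∈ s := hs.out ha hb ⟨hac, Fin.le_def.2 (by simp only [c]; omega)⟩
    have hcb : ((pathGraph n).induce s).Adj ⟨c, hc⟩ ⟨b, hb⟩ :=
      pathGraph_adj.2 (Or.inl (show (a : ℕ) + k + 1 = b by omega))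
    exact (ih hc hac rfl).trans hcb.reachable

theorem SimpleGraph.pathGraph_induce_preconnected {n : ℕ} {s : Set (Fin n)} (hs : s.OrdConnected) :
    ((pathGraph n).induce s).Preconnected := fun ⟨a, ha⟩ ⟨b, hb⟩ =>
  (le_total a b).elim (pathGraph_induce_reachable hs ha hb)
    fun hba => (pathGraph_induce_reachable hs hb ha hba).symm

theorem card_le_compCard {V : Type*} [Finite V] {G : SimpleGraph V} {A s : Set V} {v : V}
    (hv : v ∈ s) (hsA : s ⊆ insert v A) (hs : (G.induce s).Preconnected) :
    Nat.card s ≤ compCard G A v :=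
  Nat.card_le_card_of_injective
    (fun u => ⟨Set.inclusion hsA u, (hs ⟨v, hv⟩ u).map (G.induceHomOfLE hsA).toHom⟩)
    fun _ _ h => Set.inclusion_injective hsA (congrArg Subtype.val h)

theorem Closed.mem_of_preconnected {V : Type*} [Finite V] {G : SimpleGraph V} {θ : V → ℕ}
    {A s : Set V} (hA : Closed G θ A) {v : V} (hv : v ∈ s) (hsA : s ⊆ insert v A)
    (hs : (G.induce s).Preconnected) (hθ : θ v ≤ Nat.card s) : v ∈ A :=
  hA v (hθ.trans (card_le_compCard hv hsA hs))

theorem feasible_iff {V : Type*} {G : SimpleGraph V} {θ : V → ℕ} {S : Set V} :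
    Feasible G θ S ↔ ∀ A, S ⊆ A → Closed G θ A → A = Set.univ := by
  simp only [Feasible, activeSet, Set.eq_univ_iff_forall, Set.mem_sInter, Set.mem_ofPred_eq]
  exact ⟨fun h A hS hA x => h x A ⟨hS, hA⟩, fun h x A ⟨hS, hA⟩ => h A hS hA x⟩

theorem pathTheta_of_lt {r : ℕ} {i : Fin (2 * r + 1)} (hi0 : (i : ℕ) ≠ 0) (hir : (i : ℕ) < r) :
    pathTheta r i = i + 1 := by
  simp only [pathTheta]
  split_ifs <;> omega

theorem pathTheta_of_gt {r : ℕ} {i : Fin (2 * r + 1)} (hri : r < i) (hi : (i : ℕ) ≠ 2 * r) :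
    pathTheta r i = 2 * r + 1 - i := by
  simp only [pathTheta]
  split_ifs <;> omega

theorem pathTheta_center {r : ℕ} (hr : 1 ≤ r) : pathTheta r ⟨r, by omega⟩ = 2 * r + 1 := by
  simp only [pathTheta]
  split_ifs <;> omega

section Activation

variable {r : ℕ} {A : Set (Fin (2 * r + 1))}
  (hS : {i : Fin (2 * r + 1) | (i : ℕ) = 0 ∨ (i : ℕ) = 2 * r} ⊆ A)
  (hA : Closed (pathGraph (2 * r + 1)) (pathTheta r) A)
include hS hA

theorem mem_of_lt_center (i : Fin (2 * r + 1)) (hir : (i : ℕ) < r) : i ∈ A := by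
  induction i using WellFoundedLT.induction with
  | _ i ih =>
  by_cases hi0 : (i : ℕ) = 0
  · exact hS (Or.inl hi0)
  refine hA.mem_of_preconnected (s := Set.Iic i) Set.self_mem_Iic (fun j hj => ?_)
    (pathGraph_induce_preconnected Set.ordConnected_Iic) ?_
  · rcases (Set.mem_Iic.1 hj).eq_or_lt with rfl | hji
    · exact Set.mem_insert _ _
    · exact Set.mem_insert_of_mem _ (ih j hji (by omega))
  · rw [pathTheta_of_lt hi0 hir, Nat.card_eq_fintype_card, Fintype.card_Iic, Fin.card_Iic]

theorem mem_of_center_lt (i : Fin (2 * r + 1)) (hri : r < i) : i ∈ A := by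
  induction i using WellFoundedGT.induction with
  | _ i ih =>
  by_cases hi : (i : ℕ) = 2 * r
  · exact hS (Or.inr hi)
  refine hA.mem_of_preconnected (s := Set.Ici i) Set.self_mem_Ici (fun j hj => ?_)
    (pathGraph_induce_preconnected Set.ordConnected_Ici) ?_
  · rcases (Set.mem_Ici.1 hj).eq_or_lt with rfl | hij
    · exact Set.mem_insert _ _
    · exact Set.mem_insert_of_mem _ (ih j hij (by omega))
  · rw [pathTheta_of_gt hri hi, Nat.card_eq_fintype_card, Fintype.card_Ici, Fin.card_Ici]

theorem center_mem (hr : 1 ≤ r) : (⟨r, by omega⟩ : Fin (2 * r + 1)) ∈ A := by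
  refine hA.mem_of_preconnected (Set.mem_univ _) (fun j _ => ?_)
    (pathGraph_induce_preconnected Set.ordConnected_univ) ?_
  · rcases lt_trichotomy (j : ℕ) r with hjr | hjr | hrj
    · exact Set.mem_insert_of_mem _ (mem_of_lt_center hS hA j hjr)
    · exact Set.mem_insert_iff.2 (Or.inl (Fin.ext hjr))
    · exact Set.mem_insert_of_mem _ (mem_of_center_lt hS hA j hrj)
  · rw [pathTheta_center hr, Nat.card_univ, Nat.card_eq_fintype_card, Fintype.card_fin]

end Activation

/-- On the path `G_r`, the two-element seedset `{v_1, v_{2r+1}}` activates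
every node of the graph. -/
theorem path_endpoints_feasible (r : ℕ) (hr : 1 ≤ r) :
    Feasible (SimpleGraph.pathGraph (2 * r + 1)) (pathTheta r)
      {i : Fin (2 * r + 1) | (i : ℕ) = 0 ∨ (i : ℕ) = 2 * r} := by
  refine feasible_iff.2 fun A hS hA => Set.eq_univ_of_forall fun i => ?_
  rcases lt_trichotomy (i : ℕ) r with hir | hir | hri
  · exact mem_of_lt_center hS hA i hir
  · rw [show i = ⟨r, by omega⟩ from Fin.ext hir]
    exact center_mem hS hA hr
  · exact mem_of_center_lt hS hA i hri
end

section
/- Let $n \geq 6$. Consider the graph $G$ on vertices $\{v_1, \dots, v_n\}$ where $\{v_1, \dots, v_{n-4}\}$ form a clique, and additional edges are $\{v_1, v_{n-3}\}$, $\{v_1, v_{n-2}\}$, $\{v_{n-3}, v_{n-1}\}$, $\{v_{n-2}, v_n\}$, and $\{v_{n-3}, v_{n-2}\}$. Let $\theta(v_i) = 2$ for $i \leq n-4$ and $\theta(v_i) = n$ for $i > n-4$. Let $f(S)$ be the number of nodes eventually activated by seedset $S$. Then for $S_1 = \{v_{n-3}\}$ and $S_2 = \{v_{n-2}\}$: $f(S_1)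 = f(S_2) = n - 3$ and $f(S_1 \cup S_2) = n - 2$; hence $f(S_1) + f(S_2) > f(S_1 \cup S_2)$ and $f$ is not supermodular. -/
/-- The clique `{v_1,…,v_{n-4}}` with pendant structure on
`v_{n-3}, v_{n-2}, v_{n-1}, v_n` (vertex `v_{k+1}` is index `k`): extra
edges `{v_1,v_{n-3}}`, `{v_1,v_{n-2}}`, `{v_{n-3},v_{n-1}}`,
`{v_{n-2},v_n}`, `{v_{n-3},v_{n-2}}`. -/
def G12 (n : ℕ) : SimpleGraph (Fin n) :=
  SimpleGraph.fromRel (fun i j =>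
    ((i : ℕ) < n - 4 ∧ (j : ℕ) < n - 4) ∨
    ((i : ℕ) = 0 ∧ (j : ℕ) = n - 4) ∨
    ((i : ℕ) = 0 ∧ (j : ℕ) = n - 3) ∨
    ((i : ℕ) = n - 4 ∧ (j : ℕ) = n - 2) ∨
    ((i : ℕ) = n - 3 ∧ (j : ℕ) = n - 1) ∨
    ((i : ℕ) = n - 4 ∧ (j : ℕ) = n - 3))

def theta12 (n : ℕ) (i : Fin n) : ℕ :=
  if (i : ℕ) < n - 4 then 2 else n

/-- The influence function: the number of nodes eventually activated. -/
noncomputable def f12 (n : ℕ) (S : Set (Fin n)) : ℕ :=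
  (activeSet (G12 n) (theta12 n) S).ncard

section Activation

variable {V : Type*} (G : SimpleGraph V) (θ : V → ℕ)

theorem activeSet_eq_of_isLeast {S A : Set V} (h : IsLeast {B | S ⊆ B ∧ Closed G θ B} A) :
    activeSet G θ S = A :=
  h.csInf_eq

theorem compCard_le_ncard_insert [Finite V] (A : Set V) (v : V) :
    compCard G A v ≤ (insert v A).ncard := by
  rw [compCard, ← Nat.card_coe_set_eq]
  exact Nat.card_le_card_of_injective Subtype.val Subtype.val_injective

theorem two_le_compCard_of_adj [Finite V] {A : Set V} {u v : V} (hu : u ∈ A)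
    (hadj : G.Adj v u) : 2 ≤ compCard G A v := by
  refine Nat.succ_le_of_lt (Finite.one_lt_card_iff_nontrivial.mpr ?_)
  exact ⟨⟨⟨v, Set.mem_insert v A⟩, .refl _⟩,
    ⟨⟨u, Set.mem_insert_of_mem v hu⟩, SimpleGraph.Adj.reachable (by exact hadj)⟩,
    by simp [Subtype.ext_iff, hadj.ne]⟩

variable {G θ}

theorem Closed.mem_of_adj [Finite V] {A : Set V} (hA : Closed G θ A) {u v : V} (hu : u ∈ A)
    (hadj : G.Adj v u) (hθ : θ v ≤ 2) : v ∈ A :=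
  hA v (hθ.trans (two_le_compCard_of_adj G hu hadj))

theorem closed_of_ncard_insert_lt [Finite V] {A : Set V}
    (h : ∀ v ∉ A, (insert v A).ncard < θ v) : Closed G θ A := by
  intro v hv
  by_contra hvA
  exact absurd (hv.trans (compCard_le_ncard_insert G A v)) (h v hvA).not_ge

end Activation

theorem Fin.ncard_setOf_val_lt (n m : ℕ) : {i : Fin n | (i : ℕ) < m}.ncard = min n m := by
  rw [Set.ncard_eq_toFinset_card', Set.toFinset_ofPred, Fin.card_filter_val_lt]

theorem Fin.setOf_val_eq {n k : ℕ} (hk : k < n) : {i : Fin n | (i : ℕ) = k} = {⟨k, hk⟩} := by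
  ext i
  simp [Fin.ext_iff]

section Example

variable {n : ℕ}

def clique12 (n : ℕ) : Set (Fin n) := {i | (i : ℕ) < n - 4}

theorem ncard_clique12 : (clique12 n).ncard = n - 4 := by
  rw [clique12, Fin.ncard_setOf_val_lt]
  omega

theorem theta12_of_mem_clique12 {i : Fin n} (hi : i ∈ clique12 n) : theta12 n i = 2 :=
  if_pos hi

theorem theta12_of_notMem_clique12 {i : Fin n} (hi : i ∉ clique12 n) : theta12 n i = n :=
  if_neg hi

theorem G12_adj_of_val_eq_zero {i j : Fin n} (hj : (j : ℕ) = 0) (hi : (i : ℕ) ≠ 0)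
    (h : (i : ℕ) < n - 4 ∨ (i : ℕ) = n - 4 ∨ (i : ℕ) = n - 3) : (G12 n).Adj i j := by
  rw [G12, SimpleGraph.fromRel_adj]
  refine ⟨fun hij => hi (hij ▸ hj), ?_⟩
  omega

theorem clique12_subset_of_closed (hn : 4 < n) {B : Set (Fin n)}
    (hB : Closed (G12 n) (theta12 n) B) {s : Fin n} (hsB : s ∈ B)
    (hs : (s : ℕ) = n - 4 ∨ (s : ℕ) = n - 3) : clique12 n ⊆ B := by
  set v₁ : Fin n := ⟨0, by omega⟩
  have hv₁ : v₁ ∈ clique12 n := show 0 < n - 4 by omega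
  have hv₁B : v₁ ∈ B := hB.mem_of_adj hsB
    (G12_adj_of_val_eq_zero rfl (by omega) (.inr hs)).symm (theta12_of_mem_clique12 hv₁).le
  intro i hi
  by_cases hi₀ : (i : ℕ) = 0
  · rwa [show i = v₁ from Fin.ext hi₀]
  · exact hB.mem_of_adj hv₁B (G12_adj_of_val_eq_zero rfl hi₀ (.inl hi))
      (theta12_of_mem_clique12 hi).le

theorem closed_clique12_union (hn : 2 < n) {S : Set (Fin n)}
    (hS : ∀ i ∈ S, (i : ℕ) = n - 4 ∨ (i : ℕ) = n - 3) :
    Closed (G12 n) (theta12 n) (clique12 n ∪ S) := by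
  refine closed_of_ncard_insert_lt fun v hv => ?_
  have hsub : clique12 n ∪ S ⊆ {i : Fin n | (i : ℕ) < n - 2} := by
    rintro i (hi | hi) <;> show (i : ℕ) < n - 2
    · exact Nat.lt_of_lt_of_le hi (by omega)
    · have := hS i hi
      omega
  calc (insert v (clique12 n ∪ S)).ncard
      ≤ (clique12 n ∪ S).ncard + 1 := Set.ncard_insert_le _ _
    _ ≤ {i : Fin n | (i : ℕ) < n - 2}.ncard + 1 := by gcongr; exact Set.toFinite _
    _ < n := by rw [Fin.ncard_setOf_val_lt]; omega
    _ = theta12 n v := (theta12_of_notMem_clique12 fun h => hv (.inl h)).symm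

theorem activeSet_G12_eq_clique12_union (hn : 4 < n) {S : Set (Fin n)} (hne : S.Nonempty)
    (hS : ∀ i ∈ S, (i : ℕ) = n - 4 ∨ (i : ℕ) = n - 3) :
    activeSet (G12 n) (theta12 n) S = clique12 n ∪ S := by
  refine activeSet_eq_of_isLeast _ _
    ⟨⟨Set.subset_union_right, closed_clique12_union (by omega) hS⟩, ?_⟩
  rintro B ⟨hSB, hB⟩
  obtain ⟨s, hs⟩ := hne
  exact Set.union_subset (clique12_subset_of_closed hn hB (hSB hs) (hS s hs)) hSB

theorem f12_eq_sub_four_add_ncard (hn : 4 < n) {S : Set (Fin n)} (hne : S.Nonempty)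
    (hS : ∀ i ∈ S, (i : ℕ) = n - 4 ∨ (i : ℕ) = n - 3) : f12 n S = n - 4 + S.ncard := by
  have hdisj : Disjoint (clique12 n) S := Set.disjoint_left.mpr fun i hi hiS => by
    have : (i : ℕ) < n - 4 := hi
    have := hS i hiS
    omega
  rw [f12, activeSet_G12_eq_clique12_union hn hne hS, Set.ncard_union_eq hdisj, ncard_clique12]

end Example

/-- The influence function is not supermodular: for `S₁ = {v_{n-3}}` and
`S₂ = {v_{n-2}}`, `f(S₁) + f(S₂) > f(S₁ ∪ S₂)`. -/
theorem not_supermodular (n : ℕ) (hn : 6 ≤ n) :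
    f12 n {i | (i : ℕ) = n - 4} = n - 3 ∧
    f12 n {i | (i : ℕ) = n - 3} = n - 3 ∧
    f12 n ({i | (i : ℕ) = n - 4} ∪ {i | (i : ℕ) = n - 3}) = n - 2 ∧
    f12 n ({i | (i : ℕ) = n - 4} ∪ {i | (i : ℕ) = n - 3})
      < f12 n {i | (i : ℕ) = n - 4} + f12 n {i | (i : ℕ) = n - 3} := by
  have hn₄ : 4 < n := by omega
  rw [Fin.setOf_val_eq (show n - 4 < n by omega), Fin.setOf_val_eq (show n - 3 < n by omega),
    Set.singleton_union]
  set v : Fin n := ⟨n - 4, _⟩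
  set w : Fin n := ⟨n - 3, _⟩
  have hv : f12 n {v} = n - 3 := by
    rw [f12_eq_sub_four_add_ncard hn₄ (Set.singleton_nonempty v) (by simp [v]),
      Set.ncard_singleton]
    omega
  have hw : f12 n {w} = n - 3 := by
    rw [f12_eq_sub_four_add_ncard hn₄ (Set.singleton_nonempty w) (by simp [w]),
      Set.ncard_singleton]
    omega
  have hvw : f12 n {v, w} = n - 2 := by
    rw [f12_eq_sub_four_add_ncard hn₄ (Set.insert_nonempty v {w}) (by simp [v, w]),
      Set.ncard_pair (by simp [v, w, Fin.ext_iff]; omega)]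
    omega
  exact ⟨hv, hw, hvw, by omega⟩
end
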